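/- Let A ⊆ P(I) be a finite poset under inclusion in which every chain has length at most 1, let H_c : E_c → ℝ (c ∈ A) be Hamiltonians, let a ∈ A be a linear point, and set B = A∖{a} with restricted Hamiltonians i*H = (H_c)_{c∈B}. Then the restriction map φ : L(A) → L(B), φ(Q) = (Q_c)_{c∈B}, restricts to a bijection between the critical points of BT_{A,H} in L(A)° and the critical points of BT_{B,i*H} in L(B)°, and also restricts to a bijection between the set of global minimizers of BT_{A,H} over L(A) and the set of global minimizers of BT_{B,i*H} over L(B). -/

import Mathlib

/- Setup: `I` a finite index set, `E i` nonempty finite sets of values, `A : Finset (Finset I)`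
a collection of subsets of `I` ordered by inclusion.  For `a : Finset I`,
`Ea E a = ∏_{i ∈ a} E i`, with coordinate projections `proj`.  A family of "local functions"
indexed by `A` is an element of `Fam E A`. -/

abbrev Ea {I : Type} (E : I → Type) (a : Finset I) : Type := (i : a) → E i

def proj {I : Type} (E : I → Type) {a b : Finset I} (h : b ⊆ a) (x : Ea E a) : Ea E b :=
  fun i => x ⟨i, h i.2⟩

abbrev Fam {I : Type} (E : I → Type) (A : Finset (Finset I)) : Type :=
  (a : A) → Ea E (a : Finset I) → ℝ

-- The local polytope `L(A)`: families of probability distributions compatible by marginalization.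
open Classical in
def MemL {I : Type} (E : I → Type) [∀ i, Fintype (E i)] (A : Finset (Finset I))
    (Q : Fam E A) : Prop :=
  (∀ a : A, (∀ x, 0 ≤ Q a x) ∧ (∑ x, Q a x) = 1) ∧
  (∀ (a b : A) (h : (b : Finset I) ⊆ (a : Finset I)) (x : Ea E (b : Finset I)),
    Q b x = ∑ y ∈ Finset.univ.filter (fun y : Ea E (a : Finset I) => proj E h y = x), Q a y)

-- The interior `L(A)°`: members of `L(A)` with all distributions strictly positive.
def MemLInt {I : Type} (E : I → Type) [∀ i, Fintype (E i)] (A : Finset (Finset I))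
    (Q : Fam E A) : Prop :=
  MemL E A Q ∧ ∀ (a : A) (x : Ea E (a : Finset I)), 0 < Q a x

-- The tangent space `TL(A)` of the local polytope.
open Classical in
def MemT {I : Type} (E : I → Type) [∀ i, Fintype (E i)] (A : Finset (Finset I))
    (u : Fam E A) : Prop :=
  (∀ a : A, (∑ x, u a x) = 0) ∧
  (∀ (a b : A) (h : (b : Finset I) ⊆ (a : Finset I)) (x : Ea E (b : Finset I)),
    u b x = ∑ y ∈ Finset.univ.filter (fun y : Ea E (a : Finset I) => proj E h y = x), u a y)

-- `μ` is the Möbius function of the poset `A` (ordered by inclusion): `μ x y = 0` for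
-- `x, y ∈ A` with `¬ y ⊆ x`, and `∑_{b ∈ A, c ⊆ b ⊆ a} μ b c = δ_{a,c}` for `c ⊆ a` in `A`.
open Classical in
def IsMobius {I : Type} (A : Finset (Finset I)) (μ : Finset I → Finset I → ℤ) : Prop :=
  (∀ x ∈ A, ∀ y ∈ A, ¬ y ⊆ x → μ x y = 0) ∧
  (∀ a ∈ A, ∀ c ∈ A, c ⊆ a →
    (∑ b ∈ A.filter (fun b => c ⊆ b ∧ b ⊆ a), μ b c) = if a = c then 1 else 0)

-- `c_A(x) = ∑_{b ∈ A, b ⊇ x} μ_A(b, x)`.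
open Classical in
noncomputable def coefC {I : Type} (A : Finset (Finset I)) (μ : Finset I → Finset I → ℤ)
    (x : Finset I) : ℤ :=
  ∑ b ∈ A.filter (fun b => x ⊆ b), μ b x

-- Shannon entropy `S(Q) = −∑_x Q x ln (Q x)` (with `0 ln 0 = 0`, as `Real.log 0 = 0`).
noncomputable def entropy {α : Type*} [Fintype α] (Q : α → ℝ) : ℝ :=
  -∑ x, Q x * Real.log (Q x)

-- The generalized Bethe free energy
-- `BT_{A,H}(Q) = ∑_{a ∈ A} c_A(a) (∑_x Q_a(x) H_a(x) − S(Q_a))`.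
open Classical in
noncomputable def BT {I : Type} (E : I → Type) [∀ i, Fintype (E i)]
    (A : Finset (Finset I)) (μ : Finset I → Finset I → ℤ)
    (H : (c : Finset I) → Ea E c → ℝ) (Q : Fam E A) : ℝ :=
  ∑ a : A, (coefC A μ (a : Finset I) : ℝ) *
    ((∑ x, Q a x * H (a : Finset I) x) - entropy (Q a))

-- A critical point of a functional `F` on `L(A)°`: a point `Q ∈ L(A)°` at which the
-- derivative at `t = 0` of `t ↦ F(Q + t u)` vanishes for every tangent vector `u ∈ TL(A)`.
open Classical in
def IsCritical {I : Type} (E : I → Type) [∀ i, Fintype (E i)]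
    (A : Finset (Finset I)) (F : Fam E A → ℝ) (Q : Fam E A) : Prop :=
  MemLInt E A Q ∧
  ∀ u : Fam E A, MemT E A u →
    deriv (fun t : ℝ => F (fun a x => Q a x + t * u a x)) 0 = 0

-- A global minimizer of `F` over `L(A)`.
def IsMinimizer {I : Type} (E : I → Type) [∀ i, Fintype (E i)]
    (A : Finset (Finset I)) (F : Fam E A → ℝ) (Q : Fam E A) : Prop :=
  MemL E A Q ∧ ∀ Q' : Fam E A, MemL E A Q' → F Q ≤ F Q'

-- Every chain of `A` has length at most 1: there is no chain `x ⊂ y ⊂ z` in `A`.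
def ChainsShort {I : Type} (A : Finset (Finset I)) : Prop :=
  ∀ x ∈ A, ∀ y ∈ A, ∀ z ∈ A, x ⊂ y → y ⊂ z → False

-- The restriction map `φ : L(A) → L(A∖{a})`, `φ(Q)_c = Q_c`.
def phiMap {I : Type} [DecidableEq I] (E : I → Type) (A : Finset (Finset I)) (a : Finset I)
    (Q : Fam E A) : Fam E (A.erase a) :=
  fun b => Q ⟨b, Finset.mem_of_mem_erase b.2⟩


section MyAux
variable {I : Type}

open Classical

lemma my_filter_irrel {α : Type} (p : α → Prop) (h1 h2 : DecidablePred p) (s : Finset α) :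
    @Finset.filter α p h1 s = @Finset.filter α p h2 s := by
  congr

lemma my_mobius_diag {A : Finset (Finset I)} {μ} (hμ : IsMobius A μ) {c} (hc : c ∈ A) :
    μ c c = 1 := by
  have h := hμ.2 c hc c hc (subset_refl c)
  have hf : A.filter (fun b => c ⊆ b ∧ b ⊆ c) = {c} := by
    ext b
    simp only [Finset.mem_filter, Finset.mem_singleton]
    constructor
    · rintro ⟨-, h1, h2⟩; exact subset_antisymm h2 h1
    · rintro rfl; exact ⟨hc, subset_refl _, subset_refl _⟩
  rw [hf, Finset.sum_singleton, if_pos rfl] at h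
  exact h

lemma my_mobius_cover {A : Finset (Finset I)} (hch : ChainsShort A) {μ} (hμ : IsMobius A μ)
    {c d} (hc : c ∈ A) (hd : d ∈ A) (hcd : c ⊂ d) : μ d c = -1 := by
  have h := hμ.2 d hd c hc hcd.subset
  have hf : A.filter (fun b => c ⊆ b ∧ b ⊆ d) = {c, d} := by
    ext b
    simp only [Finset.mem_filter, Finset.mem_insert, Finset.mem_singleton]
    constructor
    · rintro ⟨hb, h1, h2⟩
      by_contra hcon
      push_neg at hcon
      exact hch c hc b hb d hd (ssubset_of_subset_of_ne h1 (Ne.symm hcon.1))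
        (ssubset_of_subset_of_ne h2 hcon.2)
    · rintro (rfl | rfl)
      · exact ⟨hc, subset_refl _, hcd.subset⟩
      · exact ⟨hd, hcd.subset, subset_refl _⟩
  rw [hf] at h
  rw [Finset.sum_pair hcd.ne] at h
  rw [if_neg hcd.ne', my_mobius_diag hμ hc] at h
  linarith

lemma my_coef_formula {A : Finset (Finset I)} (hch : ChainsShort A) {μ} (hμ : IsMobius A μ)
    {c} (hc : c ∈ A) :
    coefC A μ c = 1 - ((A.filter (fun b => c ⊂ b)).card : ℤ) := by
  have hsplit : A.filter (fun b => c ⊆ b) = insert c (A.filter (fun b => c ⊂ b)) := by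
    ext b
    simp only [Finset.mem_filter, Finset.mem_insert]
    constructor
    · rintro ⟨hb, h1⟩
      rcases eq_or_ne c b with rfl | hne
      · exact Or.inl rfl
      · exact Or.inr ⟨hb, ssubset_of_subset_of_ne h1 hne⟩
    · rintro (rfl | ⟨hb, h1⟩)
      · exact ⟨hc, subset_refl _⟩
      · exact ⟨hb, h1.subset⟩
  have hnc : c ∉ A.filter (fun b => c ⊂ b) := by
    simp only [Finset.mem_filter]
    rintro ⟨-, h1⟩; exact h1.ne rfl
  rw [coefC, hsplit, Finset.sum_insert hnc, my_mobius_diag hμ hc]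
  rw [Finset.sum_congr rfl (fun b hb => by
    simp only [Finset.mem_filter] at hb
    exact my_mobius_cover hch hμ hc hb.1 hb.2)]
  simp [Finset.sum_const]
  ring

variable [DecidableEq I]

lemma my_chains_erase {A : Finset (Finset I)} (hch : ChainsShort A) (a : Finset I) :
    ChainsShort (A.erase a) :=
  fun x hx y hy z hz h1 h2 =>
    hch x (Finset.mem_of_mem_erase hx) y (Finset.mem_of_mem_erase hy)
      z (Finset.mem_of_mem_erase hz) h1 h2

variable {A : Finset (Finset I)} {a aUp : Finset I}

lemma my_above (hchain : ChainsShort A) (haA : a ∈ A) (hUpA : aUp ∈ A) (hlt : a ⊂ aUp)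
    (hlin : ∀ b ∈ A, a ⊂ b → aUp ⊆ b) {b} (hb : b ∈ A) (hab : a ⊆ b) (hne : b ≠ a) :
    b = aUp := by
  have h1 : a ⊂ b := ssubset_of_subset_of_ne hab (Ne.symm hne)
  have h2 := hlin b hb h1
  by_contra h3
  exact hchain a haA aUp hUpA b hb hlt (ssubset_of_subset_of_ne h2 (Ne.symm h3))

lemma my_below (hchain : ChainsShort A) (haA : a ∈ A) (hUpA : aUp ∈ A) (hlt : a ⊂ aUp)
    {c} (hc : c ∈ A) (hca : c ⊆ a) : c = a := by
  by_contra h3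
  exact hchain c hc a haA aUp hUpA (ssubset_of_subset_of_ne hca h3) hlt

lemma my_filter_above (hchain : ChainsShort A) (haA : a ∈ A) (hUpA : aUp ∈ A) (hlt : a ⊂ aUp)
    (hlin : ∀ b ∈ A, a ⊂ b → aUp ⊆ b) :
    A.filter (fun b => a ⊂ b) = {aUp} := by
  ext b
  simp only [Finset.mem_filter, Finset.mem_singleton]
  constructor
  · rintro ⟨hb, h1⟩
    exact my_above hchain haA hUpA hlt hlin hb h1.subset (fun h => h1.ne h.symm)
  · rintro rfl; exact ⟨hUpA, hlt⟩

lemma my_coefC_a (hchain : ChainsShort A) (haA : a ∈ A) (hUpA : aUp ∈ A) (hlt : a ⊂ aUp)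
    (hlin : ∀ b ∈ A, a ⊂ b → aUp ⊆ b) {μA} (hμA : IsMobius A μA) :
    coefC A μA a = 0 := by
  rw [my_coef_formula hchain hμA haA,
    my_filter_irrel (fun b => a ⊂ b) _ inferInstance A,
    my_filter_above hchain haA hUpA hlt hlin]
  simp

lemma my_coefC_agree (hchain : ChainsShort A) (haA : a ∈ A) (hUpA : aUp ∈ A) (hlt : a ⊂ aUp)
    {μA} (hμA : IsMobius A μA) {μB} (hμB : IsMobius (A.erase a) μB)
    {c} (hc : c ∈ A) (hca : c ≠ a) :
    coefC A μA c = coefC (A.erase a) μB c := by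
  have hcB : c ∈ A.erase a := Finset.mem_erase.mpr ⟨hca, hc⟩
  rw [my_coef_formula hchain hμA hc, my_coef_formula (my_chains_erase hchain a) hμB hcB]
  have : A.filter (fun b => c ⊂ b) = (A.erase a).filter (fun b => c ⊂ b) := by
    ext b
    simp only [Finset.mem_filter, Finset.mem_erase]
    constructor
    · rintro ⟨hb, h1⟩
      refine ⟨⟨?_, hb⟩, h1⟩
      rintro rfl
      exact hca (my_below hchain hb hUpA hlt hc h1.subset)
    · rintro ⟨⟨-, hb⟩, h1⟩; exact ⟨hb, h1⟩
  rw [my_filter_irrel (fun b => c ⊂ b) _ inferInstance A,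
    my_filter_irrel (fun b => c ⊂ b) _ inferInstance (A.erase a), this]

end MyAux

set_option linter.unusedSectionVars false
set_option maxHeartbeats 1000000

section MyLift
variable {I : Type} (E : I → Type) [∀ i, Fintype (E i)] [∀ i, Nonempty (E i)]
variable (A B : Finset (Finset I)) (a aUp : Finset I)

open Classical

lemma my_proj_self {c : Finset I} (h : c ⊆ c) (y : Ea E c) : proj E h y = y := rfl

lemma my_filter_self {c : Finset I} (h : c ⊆ c) (x : Ea E c) :
    (Finset.univ.filter (fun y : Ea E c => proj E h y = x)) = {x} := by
  ext y
  rw [Finset.mem_filter, Finset.mem_singleton]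
  exact ⟨fun h => h.2, fun h => ⟨Finset.mem_univ _, h⟩⟩

lemma my_fiber_sum {b c : Finset I} (h : b ⊆ c) (f : Ea E c → ℝ) :
    ∑ x : Ea E b, ∑ y ∈ Finset.univ.filter (fun y : Ea E c => proj E h y = x), f y
      = ∑ y, f y :=
  Finset.sum_fiberwise _ _ _

lemma my_fiber_surj {b c : Finset I} (h : b ⊆ c) (x : Ea E b) :
    ∃ y : Ea E c, proj E h y = x := by
  refine ⟨fun i => if hi : (i : I) ∈ b then x ⟨i, hi⟩ else Classical.ofNonempty, ?_⟩
  funext i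
  show (if hi : (i : I) ∈ b then x ⟨i, hi⟩ else Classical.ofNonempty) = x i
  rw [dif_pos i.2]

-- abstract description of B = A.erase a
def my_phi (hB : ∀ c, c ∈ B ↔ c ∈ A ∧ c ≠ a) (Q : Fam E A) : Fam E B :=
  fun b => Q ⟨(b : Finset I), ((hB _).1 b.2).1⟩

variable {A B a aUp}

lemma my_chains_sub (hBA : ∀ c ∈ B, c ∈ A) (hch : ChainsShort A) : ChainsShort B :=
  fun x hx y hy z hz h1 h2 => hch x (hBA x hx) y (hBA y hy) z (hBA z hz) h1 h2

lemma my_coefC_agree_B (hB : ∀ c, c ∈ B ↔ c ∈ A ∧ c ≠ a) (hUpA : aUp ∈ A)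
    (hchain : ChainsShort A) (haA : a ∈ A) (hlt : a ⊂ aUp)
    {μA μB : Finset I → Finset I → ℤ}
    (hμA : IsMobius A μA) (hμB : IsMobius B μB)
    {c : Finset I} (hc : c ∈ A) (hca : c ≠ a) :
    coefC A μA c = coefC B μB c := by
  have hcB : c ∈ B := (hB _).2 ⟨hc, hca⟩
  have hchB : ChainsShort B := my_chains_sub (fun b hb => ((hB _).1 hb).1) hchain
  rw [my_coef_formula hchain hμA hc, my_coef_formula hchB hμB hcB]
  have hf : A.filter (fun b => c ⊂ b) = B.filter (fun b => c ⊂ b) := by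
    ext b
    simp only [Finset.mem_filter]
    constructor
    · rintro ⟨hb, h1⟩
      refine ⟨(hB b).2 ⟨hb, ?_⟩, h1⟩
      rintro rfl
      exact hca (my_below hchain haA hUpA hlt hc h1.subset)
    · rintro ⟨hb, h1⟩
      exact ⟨((hB b).1 hb).1, h1⟩
  rw [hf]

noncomputable def liftF (hB : ∀ c, c ∈ B ↔ c ∈ A ∧ c ≠ a)
    (hUpA : aUp ∈ A) (hne : aUp ≠ a) (hsub : a ⊆ aUp)
    (G : Fam E B) : Fam E A :=
  fun c => if h : (c : Finset I) = a then
      fun x => ∑ y ∈ Finset.univ.filter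
        (fun y : Ea E aUp => proj E (show (c : Finset I) ⊆ aUp by rw [h]; exact hsub) y = x),
        G ⟨aUp, (hB _).2 ⟨hUpA, hne⟩⟩ y
    else G ⟨(c : Finset I), (hB _).2 ⟨c.2, h⟩⟩

variable (hB : ∀ c, c ∈ B ↔ c ∈ A ∧ c ≠ a)
  (hUpA : aUp ∈ A) (hne : aUp ≠ a) (hsub : a ⊆ aUp)

lemma my_lift_a (G : Fam E B) (hm : a ∈ A) (x : Ea E a) :
    liftF E hB hUpA hne hsub G ⟨a, hm⟩ x
      = ∑ y ∈ Finset.univ.filter (fun y : Ea E aUp => proj E hsub y = x),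
          G ⟨aUp, (hB _).2 ⟨hUpA, hne⟩⟩ y := by
  unfold liftF
  rw [dif_pos rfl]

lemma my_lift_ne (G : Fam E B) {c : Finset I} (hm : c ∈ A) (hc : c ≠ a) :
    liftF E hB hUpA hne hsub G ⟨c, hm⟩ = G ⟨c, (hB _).2 ⟨hm, hc⟩⟩ := by
  show dite _ _ _ = _
  rw [dif_neg hc]

lemma my_phi_lift (G : Fam E B) :
    my_phi E A B a hB (liftF E hB hUpA hne hsub G) = G := by
  funext b
  have hb : (b : Finset I) ≠ a := ((hB _).1 b.2).2
  show dite _ _ _ = _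
  rw [dif_neg hb]

lemma my_lift_marg (hchain : ChainsShort A) (haA : a ∈ A) (hlt : a ⊂ aUp)
    (hlin : ∀ b ∈ A, a ⊂ b → aUp ⊆ b)
    (G : Fam E B)
    (hG : ∀ (a' b' : B) (h : (b' : Finset I) ⊆ (a' : Finset I)) (x : Ea E (b' : Finset I)),
      G b' x = ∑ y ∈ Finset.univ.filter
        (fun y : Ea E (a' : Finset I) => proj E h y = x), G a' y) :
    ∀ (c b : A) (h : (b : Finset I) ⊆ (c : Finset I)) (x : Ea E (b : Finset I)),
      liftF E hB hUpA hne hsub G b x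
        = ∑ y ∈ Finset.univ.filter
            (fun y : Ea E (c : Finset I) => proj E h y = x),
          liftF E hB hUpA hne hsub G c y := by
  rintro ⟨c1, hc1⟩ ⟨b1, hb1⟩ h x
  by_cases hb : b1 = a
  · subst b1
    by_cases hc : c1 = a
    · subst c1
      rw [my_filter_self E h x, Finset.sum_singleton]
    · have hc2 : c1 = aUp := my_above hchain haA hUpA hlt hlin hc1 h hc
      subst c1
      rw [my_lift_a E hB hUpA hne hsub G hb1 x,
        Finset.sum_congr rfl (fun y _ => congrFun (my_lift_ne E hB hUpA hne hsub G hc1 hc) y)]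
  · by_cases hc : c1 = a
    · subst c1
      exact absurd (my_below hchain haA hUpA hlt hb1 h) hb
    · rw [Finset.sum_congr rfl (fun y _ => congrFun (my_lift_ne E hB hUpA hne hsub G hc1 hc) y),
        congrFun (my_lift_ne E hB hUpA hne hsub G hb1 hb) x]
      exact hG ⟨c1, (hB _).2 ⟨hc1, hc⟩⟩ ⟨b1, (hB _).2 ⟨hb1, hb⟩⟩ h x

lemma my_memL_phi (Q : Fam E A) (hQ : MemL E A Q) : MemL E B (my_phi E A B a hB Q) := by
  constructor
  · intro b
    exact hQ.1 ⟨(b : Finset I), ((hB _).1 b.2).1⟩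
  · intro a' b' h x
    exact hQ.2 ⟨(a' : Finset I), ((hB _).1 a'.2).1⟩ ⟨(b' : Finset I), ((hB _).1 b'.2).1⟩ h x

lemma my_memT_phi (u : Fam E A) (hu : MemT E A u) : MemT E B (my_phi E A B a hB u) := by
  constructor
  · intro b
    exact hu.1 ⟨(b : Finset I), ((hB _).1 b.2).1⟩
  · intro a' b' h x
    exact hu.2 ⟨(a' : Finset I), ((hB _).1 a'.2).1⟩ ⟨(b' : Finset I), ((hB _).1 b'.2).1⟩ h x

lemma my_memLInt_phi (Q : Fam E A) (hQ : MemLInt E A Q) :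
    MemLInt E B (my_phi E A B a hB Q) :=
  ⟨my_memL_phi E hB Q hQ.1, fun b x => hQ.2 ⟨(b : Finset I), ((hB _).1 b.2).1⟩ x⟩

lemma my_lift_sum_a (G : Fam E B) (hm : a ∈ A) :
    ∑ x, liftF E hB hUpA hne hsub G ⟨a, hm⟩ x
      = ∑ y, G ⟨aUp, (hB _).2 ⟨hUpA, hne⟩⟩ y := by
  rw [Finset.sum_congr rfl (fun x _ => my_lift_a E hB hUpA hne hsub G hm x)]
  exact my_fiber_sum E hsub _

lemma my_memL_lift (hchain : ChainsShort A) (haA : a ∈ A) (hlt : a ⊂ aUp)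
    (hlin : ∀ b ∈ A, a ⊂ b → aUp ⊆ b)
    (G : Fam E B) (hG : MemL E B G) :
    MemL E A (liftF E hB hUpA hne hsub G) := by
  constructor
  · rintro ⟨c1, hc1⟩
    by_cases hc : c1 = a
    · subst c1
      constructor
      · intro x
        rw [my_lift_a E hB hUpA hne hsub G hc1 x]
        exact Finset.sum_nonneg fun y _ => (hG.1 ⟨aUp, (hB _).2 ⟨hUpA, hne⟩⟩).1 y
      · exact (my_lift_sum_a E hB hUpA hne hsub G hc1).trans
          (hG.1 ⟨aUp, (hB _).2 ⟨hUpA, hne⟩⟩).2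
    · have h1 := congrFun (my_lift_ne E hB hUpA hne hsub G hc1 hc)
      constructor
      · intro x
        rw [h1 x]
        exact (hG.1 ⟨c1, (hB _).2 ⟨hc1, hc⟩⟩).1 x
      · rw [Finset.sum_congr rfl (fun x _ => h1 x)]
        exact (hG.1 ⟨c1, (hB _).2 ⟨hc1, hc⟩⟩).2
  · exact my_lift_marg E hB hUpA hne hsub hchain haA hlt hlin G hG.2

lemma my_memLInt_lift (hchain : ChainsShort A) (haA : a ∈ A) (hlt : a ⊂ aUp)
    (hlin : ∀ b ∈ A, a ⊂ b → aUp ⊆ b)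
    (G : Fam E B) (hG : MemLInt E B G) :
    MemLInt E A (liftF E hB hUpA hne hsub G) := by
  refine ⟨my_memL_lift E hB hUpA hne hsub hchain haA hlt hlin G hG.1, ?_⟩
  rintro ⟨c1, hc1⟩ x
  by_cases hc : c1 = a
  · subst c1
    rw [my_lift_a E hB hUpA hne hsub G hc1 x]
    apply Finset.sum_pos
    · intro y _
      exact hG.2 ⟨aUp, (hB _).2 ⟨hUpA, hne⟩⟩ y
    · obtain ⟨y, hy⟩ := my_fiber_surj E hsub x
      exact ⟨y, by simp [hy]⟩
  · rw [congrFun (my_lift_ne E hB hUpA hne hsub G hc1 hc) x]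
    exact hG.2 ⟨c1, (hB _).2 ⟨hc1, hc⟩⟩ x

lemma my_memT_lift (hchain : ChainsShort A) (haA : a ∈ A) (hlt : a ⊂ aUp)
    (hlin : ∀ b ∈ A, a ⊂ b → aUp ⊆ b)
    (G : Fam E B) (hG : MemT E B G) :
    MemT E A (liftF E hB hUpA hne hsub G) := by
  constructor
  · rintro ⟨c1, hc1⟩
    by_cases hc : c1 = a
    · subst c1
      exact (my_lift_sum_a E hB hUpA hne hsub G hc1).trans
        (hG.1 ⟨aUp, (hB _).2 ⟨hUpA, hne⟩⟩)
    · rw [Finset.sum_congr rfl (fun x _ => congrFun (my_lift_ne E hB hUpA hne hsub G hc1 hc) x)]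
      exact hG.1 ⟨c1, (hB _).2 ⟨hc1, hc⟩⟩
  · exact my_lift_marg E hB hUpA hne hsub hchain haA hlt hlin G hG.2

lemma my_lift_phi (Q : Fam E A) (haA : a ∈ A) (hQ : MemL E A Q) :
    liftF E hB hUpA hne hsub (my_phi E A B a hB Q) = Q := by
  funext c x
  obtain ⟨c1, hc1⟩ := c
  by_cases hc : c1 = a
  · subst c1
    rw [my_lift_a E hB hUpA hne hsub _ hc1 x]
    exact (hQ.2 ⟨aUp, hUpA⟩ ⟨a, hc1⟩ hsub x).symm
  · rw [congrFun (my_lift_ne E hB hUpA hne hsub _ hc1 hc) x]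
    rfl

include hUpA in
lemma my_BT_eq (hchain : ChainsShort A) (haA : a ∈ A) (hlt : a ⊂ aUp)
    (hlin : ∀ b ∈ A, a ⊂ b → aUp ⊆ b) {μA μB : Finset I → Finset I → ℤ}
    (hμA : IsMobius A μA) (hμB : IsMobius B μB)
    (H : (c : Finset I) → Ea E c → ℝ) (Q : Fam E A) :
    BT E A μA H Q = BT E B μB H (my_phi E A B a hB Q) := by
  unfold BT
  rw [← Finset.add_sum_erase Finset.univ _ (Finset.mem_univ (⟨a, haA⟩ : A))]
  have h0 : coefC A μA ((⟨a, haA⟩ : A) : Finset I) = 0 :=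
    my_coefC_a hchain haA hUpA hlt hlin hμA
  rw [h0]
  push_cast
  rw [zero_mul, zero_add]
  refine Finset.sum_bij'
    (fun c hc => ⟨(c : Finset I), (hB _).2 ⟨c.2,
      fun h => (Finset.mem_erase.mp hc).1 (Subtype.ext h)⟩⟩)
    (fun b _ => ⟨(b : Finset I), ((hB _).1 b.2).1⟩)
    (fun c hc => Finset.mem_univ _)
    (fun b hb => ?_) (fun c hc => rfl) (fun b hb => rfl) (fun c hc => ?_)
  · rw [Finset.mem_erase]
    refine ⟨?_, Finset.mem_univ _⟩
    intro hcon
    exact ((hB _).1 b.2).2 (congrArg Subtype.val hcon)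
  · have hca : (c : Finset I) ≠ a :=
      fun h => (Finset.mem_erase.mp hc).1 (Subtype.ext h)
    have hcoef := my_coefC_agree_B hB hUpA hchain haA hlt hμA hμB c.2 hca
    rw [hcoef]
    rfl

lemma my_phi_add (Q u : Fam E A) (t : ℝ) :
    my_phi E A B a hB (fun c x => Q c x + t * u c x)
      = fun b x => my_phi E A B a hB Q b x + t * my_phi E A B a hB u b x := rfl

include hUpA hne hsub in
lemma my_crit_phi (hchain : ChainsShort A) (haA : a ∈ A) (hlt : a ⊂ aUp)
    (hlin : ∀ b ∈ A, a ⊂ b → aUp ⊆ b) {μA μB : Finset I → Finset I → ℤ}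
    (hμA : IsMobius A μA) (hμB : IsMobius B μB)
    (H : (c : Finset I) → Ea E c → ℝ) (Q : Fam E A)
    (hQ : IsCritical E A (BT E A μA H) Q) :
    IsCritical E B (BT E B μB H) (my_phi E A B a hB Q) := by
  refine ⟨my_memLInt_phi E hB Q hQ.1, ?_⟩
  intro u' hu'
  have huT : MemT E A (liftF E hB hUpA hne hsub u') :=
    my_memT_lift E hB hUpA hne hsub hchain haA hlt hlin u' hu'
  have hfun : (fun t : ℝ => BT E B μB H
        (fun b x => my_phi E A B a hB Q b x + t * u' b x))
      = (fun t : ℝ => BT E A μA H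
        (fun c x => Q c x + t * liftF E hB hUpA hne hsub u' c x)) := by
    funext t
    rw [my_BT_eq E hB hUpA hchain haA hlt hlin hμA hμB H
      (fun c x => Q c x + t * liftF E hB hUpA hne hsub u' c x)]
    rw [my_phi_add E hB]
    rw [my_phi_lift E hB hUpA hne hsub u']
  rw [hfun]
  exact hQ.2 _ huT

lemma my_crit_lift (hchain : ChainsShort A) (haA : a ∈ A) (hlt : a ⊂ aUp)
    (hlin : ∀ b ∈ A, a ⊂ b → aUp ⊆ b) {μA μB : Finset I → Finset I → ℤ}
    (hμA : IsMobius A μA) (hμB : IsMobius B μB)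
    (H : (c : Finset I) → Ea E c → ℝ) (Q' : Fam E B)
    (hQ' : IsCritical E B (BT E B μB H) Q') :
    IsCritical E A (BT E A μA H) (liftF E hB hUpA hne hsub Q') := by
  refine ⟨my_memLInt_lift E hB hUpA hne hsub hchain haA hlt hlin Q' hQ'.1, ?_⟩
  intro u huT
  have hphiu : MemT E B (my_phi E A B a hB u) := my_memT_phi E hB u huT
  have hfun : (fun t : ℝ => BT E A μA H
        (fun c x => liftF E hB hUpA hne hsub Q' c x + t * u c x))
      = (fun t : ℝ => BT E B μB H
        (fun b x => Q' b x + t * my_phi E A B a hB u b x)) := by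
    funext t
    rw [my_BT_eq E hB hUpA hchain haA hlt hlin hμA hμB H
      (fun c x => liftF E hB hUpA hne hsub Q' c x + t * u c x)]
    rw [my_phi_add E hB]
    rw [my_phi_lift E hB hUpA hne hsub Q']
  rw [hfun]
  exact hQ'.2 _ hphiu

lemma my_BT_lift (hchain : ChainsShort A) (haA : a ∈ A) (hlt : a ⊂ aUp)
    (hlin : ∀ b ∈ A, a ⊂ b → aUp ⊆ b) {μA μB : Finset I → Finset I → ℤ}
    (hμA : IsMobius A μA) (hμB : IsMobius B μB)
    (H : (c : Finset I) → Ea E c → ℝ) (G : Fam E B) :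
    BT E A μA H (liftF E hB hUpA hne hsub G) = BT E B μB H G := by
  rw [my_BT_eq E hB hUpA hchain haA hlt hlin hμA hμB H (liftF E hB hUpA hne hsub G),
    my_phi_lift E hB hUpA hne hsub G]

include hUpA hne hsub in
lemma my_min_phi (hchain : ChainsShort A) (haA : a ∈ A) (hlt : a ⊂ aUp)
    (hlin : ∀ b ∈ A, a ⊂ b → aUp ⊆ b) {μA μB : Finset I → Finset I → ℤ}
    (hμA : IsMobius A μA) (hμB : IsMobius B μB)
    (H : (c : Finset I) → Ea E c → ℝ) (Q : Fam E A)
    (hQ : IsMinimizer E A (BT E A μA H) Q) :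
    IsMinimizer E B (BT E B μB H) (my_phi E A B a hB Q) := by
  refine ⟨my_memL_phi E hB Q hQ.1, ?_⟩
  intro Q'' hQ''
  rw [← my_BT_eq E hB hUpA hchain haA hlt hlin hμA hμB H Q,
    ← my_BT_lift E hB hUpA hne hsub hchain haA hlt hlin hμA hμB H Q'']
  exact hQ.2 _ (my_memL_lift E hB hUpA hne hsub hchain haA hlt hlin Q'' hQ'')

lemma my_min_lift (hchain : ChainsShort A) (haA : a ∈ A) (hlt : a ⊂ aUp)
    (hlin : ∀ b ∈ A, a ⊂ b → aUp ⊆ b) {μA μB : Finset I → Finset I → ℤ}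
    (hμA : IsMobius A μA) (hμB : IsMobius B μB)
    (H : (c : Finset I) → Ea E c → ℝ) (Q' : Fam E B)
    (hQ' : IsMinimizer E B (BT E B μB H) Q') :
    IsMinimizer E A (BT E A μA H) (liftF E hB hUpA hne hsub Q') := by
  refine ⟨my_memL_lift E hB hUpA hne hsub hchain haA hlt hlin Q' hQ'.1, ?_⟩
  intro Q'' hQ''
  rw [my_BT_lift E hB hUpA hne hsub hchain haA hlt hlin hμA hμB H Q',
    my_BT_eq E hB hUpA hchain haA hlt hlin hμA hμB H Q'']
  exact hQ'.2 _ (my_memL_phi E hB Q'' hQ'')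

end MyLift

open Classical in
-- Let `A ⊆ P(I)` be a finite poset under inclusion whose chains have length at most 1, with
-- Hamiltonians `H_c : E_c → ℝ`, let `a ∈ A` be a linear point (witness `aUp`), and set
-- `B = A∖{a}` with restricted Hamiltonians.  The restriction map `φ` restricts to a bijection
-- between the critical points of `BT_{A,H}` in `L(A)°` and those of `BT_{B,i*H}` in `L(B)°`,
-- and to a bijection between the global minimizers of `BT_{A,H}` over `L(A)` and those of
-- `BT_{B,i*H}` over `L(B)`.
theorem stmt15 {I : Type} [Fintype I] [DecidableEq I]
    (E : I → Type) [∀ i, Fintype (E i)] [∀ i, DecidableEq (E i)] [∀ i, Nonempty (E i)]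
    (A : Finset (Finset I)) (hchain : ChainsShort A)
    (a aUp : Finset I) (haA : a ∈ A) (hUpA : aUp ∈ A) (hlt : a ⊂ aUp)
    (hlin : ∀ b ∈ A, a ⊂ b → aUp ⊆ b)
    (μA : Finset I → Finset I → ℤ) (hμA : IsMobius A μA)
    (μB : Finset I → Finset I → ℤ) (hμB : IsMobius (A.erase a) μB)
    (H : (c : Finset I) → Ea E c → ℝ) :
    Set.BijOn (phiMap E A a)
      {Q : Fam E A | IsCritical E A (BT E A μA H) Q}
      {Q : Fam E (A.erase a) | IsCritical E (A.erase a) (BT E (A.erase a) μB H) Q} ∧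
    Set.BijOn (phiMap E A a)
      {Q : Fam E A | IsMinimizer E A (BT E A μA H) Q}
      {Q : Fam E (A.erase a) | IsMinimizer E (A.erase a) (BT E (A.erase a) μB H) Q} := by
  have hB : ∀ c, c ∈ A.erase a ↔ c ∈ A ∧ c ≠ a := by
    intro c
    rw [Finset.mem_erase]
    exact ⟨fun h => ⟨h.2, h.1⟩, fun h => ⟨h.2, h.1⟩⟩
  have hne : aUp ≠ a := hlt.ne'
  have hsub : a ⊆ aUp := hlt.subset
  have hphi : phiMap E A a = my_phi E A (A.erase a) a hB := rfl
  rw [hphi]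
  constructor
  · refine ⟨?_, ?_, ?_⟩
    · intro Q hQ
      exact my_crit_phi E hB hUpA hne hsub hchain haA hlt hlin hμA hμB H Q hQ
    · intro Q h1 Q2 h2 heq
      calc Q = liftF E hB hUpA hne hsub (my_phi E A (A.erase a) a hB Q) :=
            (my_lift_phi E hB hUpA hne hsub Q haA h1.1.1).symm
        _ = liftF E hB hUpA hne hsub (my_phi E A (A.erase a) a hB Q2) := by rw [heq]
        _ = Q2 := my_lift_phi E hB hUpA hne hsub Q2 haA h2.1.1
    · intro Q' hQ'
      exact ⟨liftF E hB hUpA hne hsub Q',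
        my_crit_lift E hB hUpA hne hsub hchain haA hlt hlin hμA hμB H Q' hQ',
        my_phi_lift E hB hUpA hne hsub Q'⟩
  · refine ⟨?_, ?_, ?_⟩
    · intro Q hQ
      exact my_min_phi E hB hUpA hne hsub hchain haA hlt hlin hμA hμB H Q hQ
    · intro Q h1 Q2 h2 heq
      calc Q = liftF E hB hUpA hne hsub (my_phi E A (A.erase a) a hB Q) :=
            (my_lift_phi E hB hUpA hne hsub Q haA h1.1).symm
        _ = liftF E hB hUpA hne hsub (my_phi E A (A.erase a) a hB Q2) := by rw [heq]
        _ = Q2 := my_lift_phi E hB hUpA hne hsub Q2 haA h2.1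
    · intro Q' hQ'
      exact ⟨liftF E hB hUpA hne hsub Q',
        my_min_lift E hB hUpA hne hsub hchain haA hlt hlin hμA hμB H Q' hQ',
        my_phi_lift E hB hUpA hne hsub Q'⟩
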